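/- Suppose M satisfies the D-RIP with constant δ := δ_{(3ζ+1)k} < 1. Let T̃ be a support of size at most 3ζk and T the support of x of size at most k, and let x_p = D(MD_{T̃})^† y with y = Mx + e. Then ‖P_{T̃}(x_p − x)‖₂ ≤ δ ‖x_p − x‖₂ + ‖P_{T̃} M* e‖₂, where P_{T̃} is the orthogonal projection onto range(D_{T̃}). -/

import Mathlib

open Matrix
open scoped Classical

noncomputable section

/-- `α` has at most `k` nonzero entries. -/
def sparse {n : ℕ} (k : ℕ) (α : EuclideanSpace ℝ (Fin n)) : Prop :=
  (Finset.univ.filter fun i => α i ≠ 0).card ≤ k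

/-- The D-RIP of order `k` with constant `δ`:
`(1-δ)‖Dα‖² ≤ ‖MDα‖² ≤ (1+δ)‖Dα‖²` for all `k`-sparse `α`. -/
def DRIP {m d n : ℕ} (M : Matrix (Fin m) (Fin d) ℝ) (D : Matrix (Fin d) (Fin n) ℝ)
    (k : ℕ) (δ : ℝ) : Prop :=
  ∀ α : EuclideanSpace ℝ (Fin n), sparse k α →
    (1 - δ) * ‖Matrix.toEuclideanLin D α‖ ^ 2 ≤
        ‖Matrix.toEuclideanLin M (Matrix.toEuclideanLin D α)‖ ^ 2 ∧
      ‖Matrix.toEuclideanLin M (Matrix.toEuclideanLin D α)‖ ^ 2 ≤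
        (1 + δ) * ‖Matrix.toEuclideanLin D α‖ ^ 2

/-- The span of the columns of `D` indexed by `T`, i.e. `range(D_T)`. -/
def colSpan {d n : ℕ} (D : Matrix (Fin d) (Fin n) ℝ) (T : Finset (Fin n)) :
    Submodule ℝ (EuclideanSpace ℝ (Fin d)) :=
  Submodule.span ℝ
    {v : EuclideanSpace ℝ (Fin d) | ∃ i ∈ T, v = (WithLp.equiv 2 (Fin d → ℝ)).symm (fun j => D j i)}

/-- The orthogonal projection onto a subspace `K`, as a map of the whole space. -/
def projOnto {d : ℕ} (K : Submodule ℝ (EuclideanSpace ℝ (Fin d))) :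
    EuclideanSpace ℝ (Fin d) →L[ℝ] EuclideanSpace ℝ (Fin d) :=
  K.subtypeL.comp K.orthogonalProjectionOnto

/-!
Write `w = x_p - x` and `u = P_{T̃} w`. Since `x_p` is a least-squares solution over
`range(D_{T̃})`, the residual `y - M x_p = e - M w` is orthogonal to `M u`, so
`⟪M u, M w⟫ = ⟪M u, e⟫ = ⟪u, P_{T̃} M* e⟫`. Both `u` and `w` lie in `range(D_{T̃ ∪ T})`, where the
D-RIP bounds the distortion of squared norms by `δ`; by polarization it bounds
`⟪u, w⟫ - ⟪M u, M w⟫` by `δ ‖u‖ ‖w‖`. As `‖u‖² = ⟪u, w⟫`, this gives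
`‖u‖² ≤ ‖u‖ (δ ‖w‖ + ‖P_{T̃} M* e‖)`.
-/

open scoped RealInnerProductSpace

section InnerProduct

variable {E F : Type*} [NormedAddCommGroup E] [InnerProductSpace ℝ E]
  [NormedAddCommGroup F] [InnerProductSpace ℝ F]

theorem real_inner_sub_inner_map_le_of_norm_sq_bounds (A : E →ₗ[ℝ] F) {δ : ℝ} {u w : E}
    (hadd : (1 - δ) * ‖u + w‖ ^ 2 ≤ ‖A (u + w)‖ ^ 2)
    (hsub : ‖A (u - w)‖ ^ 2 ≤ (1 + δ) * ‖u - w‖ ^ 2) :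
    ⟪u, w⟫ - ⟪A u, A w⟫ ≤ δ / 2 * (‖u‖ ^ 2 + ‖w‖ ^ 2) := by
  rw [map_add, norm_add_sq_real, norm_add_sq_real] at hadd
  rw [map_sub, norm_sub_sq_real, norm_sub_sq_real] at hsub
  linarith

theorem real_inner_sub_inner_map_le_mul_norm (A : E →ₗ[ℝ] F) {δ : ℝ} (S : Submodule ℝ E)
    (hA : ∀ v ∈ S, (1 - δ) * ‖v‖ ^ 2 ≤ ‖A v‖ ^ 2 ∧ ‖A v‖ ^ 2 ≤ (1 + δ) * ‖v‖ ^ 2)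
    {u w : E} (hu : u ∈ S) (hw : w ∈ S) :
    ⟪u, w⟫ - ⟪A u, A w⟫ ≤ δ * (‖u‖ * ‖w‖) := by
  rcases eq_or_ne u 0 with rfl | hu0
  · simp
  rcases eq_or_ne w 0 with rfl | hw0
  · simp
  have hpos : 0 < ‖u‖ * ‖w‖ := mul_pos (norm_pos_iff.2 hu0) (norm_pos_iff.2 hw0)
  -- polarize at `‖w‖ • u ± ‖u‖ • w`, whose two summands have the same norm
  have key := real_inner_sub_inner_map_le_of_norm_sq_bounds A
    (hA _ (S.add_mem (S.smul_mem ‖w‖ hu) (S.smul_mem ‖u‖ hw))).1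
    (hA _ (S.sub_mem (S.smul_mem ‖w‖ hu) (S.smul_mem ‖u‖ hw))).2
  simp only [map_smul, real_inner_smul_left, real_inner_smul_right, norm_smul,
    Real.norm_eq_abs, abs_norm] at key
  nlinarith

theorem real_inner_map_sub_eq_zero_of_forall_norm_le (A : E →ₗ[ℝ] F) (K : Submodule ℝ E)
    {y : F} {x : E} (hx : x ∈ K) (hmin : ∀ v ∈ K, ‖y - A x‖ ≤ ‖y - A v‖) {v : E} (hv : v ∈ K) :
    ⟪A v, y - A x⟫ = 0 := by
  rw [real_inner_comm]
  refine ((K.map A).norm_eq_iInf_iff_real_inner_eq_zero (K.mem_map_of_mem hx)).1 ?_ _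
    (K.mem_map_of_mem hv)
  refine le_antisymm (le_ciInf ?_)
    (ciInf_le ⟨0, ?_⟩ (⟨A x, K.mem_map_of_mem hx⟩ : (K.map A : Set F)))
  · rintro ⟨_, v, hv, rfl⟩
    exact hmin v hv
  · rintro _ ⟨_, rfl⟩
    exact norm_nonneg _

theorem norm_starProjection_sub_le [FiniteDimensional ℝ E] [FiniteDimensional ℝ F]
    (A : E →ₗ[ℝ] F) {δ : ℝ} {K S : Submodule ℝ E} (hKS : K ≤ S)
    (hA : ∀ v ∈ S, (1 - δ) * ‖v‖ ^ 2 ≤ ‖A v‖ ^ 2 ∧ ‖A v‖ ^ 2 ≤ (1 + δ) * ‖v‖ ^ 2)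
    {x xp : E} {e : F} (hxp : xp ∈ K) (hmin : ∀ v ∈ K, ‖A x + e - A xp‖ ≤ ‖A x + e - A v‖)
    (hw : xp - x ∈ S) :
    ‖K.starProjection (xp - x)‖ ≤ δ * ‖xp - x‖ + ‖K.starProjection (LinearMap.adjoint A e)‖ := by
  set w := xp - x
  set u := K.starProjection w
  have huK : u ∈ K := K.starProjection_apply_mem w
  have hnormal : ⟪A u, A w⟫ = ⟪A u, e⟫ := by
    have h := real_inner_map_sub_eq_zero_of_forall_norm_le A K hxp hmin huK
    rwa [show A x + e - A xp = e - A w by rw [map_sub]; abel, inner_sub_right, sub_eq_zero,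
      eq_comm] at h
  have hadj : ⟪u, K.starProjection (LinearMap.adjoint A e)⟫ = ⟪A u, e⟫ := by
    rw [← K.inner_starProjection_left_eq_right, K.starProjection_eq_self_iff.2 huK,
      LinearMap.adjoint_inner_right]
  have hdistort := real_inner_sub_inner_map_le_mul_norm A S hA (hKS huK) hw
  have hδw : 0 ≤ δ * ‖w‖ := by
    rcases (norm_nonneg w).eq_or_lt with h | h
    · rw [← h, mul_zero]
    · nlinarith [hA w hw]
  have key : ‖u‖ ^ 2 ≤ ‖u‖ * (δ * ‖w‖ + ‖K.starProjection (LinearMap.adjoint A e)‖) :=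
    calc ‖u‖ ^ 2 = ⟪u, w⟫ := by
          rw [← real_inner_self_eq_norm_sq, K.inner_starProjection_left_eq_right,
            K.starProjection_eq_self_iff.2 huK, real_inner_comm]
      _ ≤ ⟪u, K.starProjection (LinearMap.adjoint A e)⟫ + δ * (‖u‖ * ‖w‖) := by linarith
      _ ≤ ‖u‖ * ‖K.starProjection (LinearMap.adjoint A e)‖ + δ * (‖u‖ * ‖w‖) := by
          gcongr; exact real_inner_le_norm _ _
      _ = ‖u‖ * (δ * ‖w‖ + ‖K.starProjection (LinearMap.adjoint A e)‖) := by ring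
  nlinarith [norm_nonneg u, norm_nonneg (K.starProjection (LinearMap.adjoint A e))]

end InnerProduct

section ColSpan

variable {d n : ℕ} (D : Matrix (Fin d) (Fin n) ℝ)

theorem toEuclideanLin_single_one (i : Fin n) :
    Matrix.toEuclideanLin D (EuclideanSpace.single i 1) =
      (WithLp.equiv 2 (Fin d → ℝ)).symm (fun j => D j i) := by
  ext j
  simp

theorem mem_colSpan_iff {T : Finset (Fin n)} {v : EuclideanSpace ℝ (Fin d)} :
    v ∈ colSpan D T ↔
      ∃ β : EuclideanSpace ℝ (Fin n), (∀ i ∉ T, β i = 0) ∧ v = Matrix.toEuclideanLin D β := by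
  constructor
  · intro hv
    induction hv using Submodule.span_induction with
    | mem w hw =>
      obtain ⟨i, hi, rfl⟩ := hw
      refine ⟨EuclideanSpace.single i 1, fun j hj => ?_, (toEuclideanLin_single_one D i).symm⟩
      simp [(ne_of_mem_of_not_mem hi hj).symm]
    | zero => exact ⟨0, by simp, by simp⟩
    | add w₁ w₂ _ _ h₁ h₂ =>
      obtain ⟨β₁, hβ₁, rfl⟩ := h₁
      obtain ⟨β₂, hβ₂, rfl⟩ := h₂
      exact ⟨β₁ + β₂, fun i hi => by simp [hβ₁ i hi, hβ₂ i hi], by simp⟩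
    | smul c w _ h =>
      obtain ⟨β, hβ, rfl⟩ := h
      exact ⟨c • β, fun i hi => by simp [hβ i hi], by simp⟩
  · rintro ⟨β, hβ, rfl⟩
    rw [← (EuclideanSpace.basisFun (Fin n) ℝ).sum_repr β, map_sum]
    refine Submodule.sum_mem _ fun i _ => ?_
    by_cases hi : i ∈ T
    · rw [map_smul, EuclideanSpace.basisFun_apply, toEuclideanLin_single_one]
      exact Submodule.smul_mem _ _ (Submodule.subset_span ⟨i, hi, rfl⟩)
    · simp [hβ i hi]

theorem colSpan_mono {T T' : Finset (Fin n)} (h : T ⊆ T') : colSpan D T ≤ colSpan D T' :=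
  Submodule.span_mono fun _ ⟨i, hi, hv⟩ => ⟨i, h hi, hv⟩

theorem DRIP.norm_sq_bounds_of_mem_colSpan {m s : ℕ} {M : Matrix (Fin m) (Fin d) ℝ} {δ : ℝ}
    (hrip : DRIP M D s δ) {T : Finset (Fin n)} (hT : T.card ≤ s)
    {v : EuclideanSpace ℝ (Fin d)} (hv : v ∈ colSpan D T) :
    (1 - δ) * ‖v‖ ^ 2 ≤ ‖Matrix.toEuclideanLin M v‖ ^ 2 ∧
      ‖Matrix.toEuclideanLin M v‖ ^ 2 ≤ (1 + δ) * ‖v‖ ^ 2 := by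
  obtain ⟨β, hβ, rfl⟩ := (mem_colSpan_iff D).1 hv
  refine hrip β ((Finset.card_le_card fun i hi => ?_).trans hT)
  by_contra hiT
  exact (Finset.mem_filter.1 hi).2 (hβ i hiT)

end ColSpan

theorem stmt12_general {m d n ζ k : ℕ}
    (M : Matrix (Fin m) (Fin d) ℝ) (D : Matrix (Fin d) (Fin n) ℝ)
    (δ : ℝ) (hrip : DRIP M D ((3 * ζ + 1) * k) δ)
    (Ttil : Finset (Fin n)) (hTtil : Ttil.card ≤ 3 * ζ * k)
    (T : Finset (Fin n)) (hT : T.card ≤ k)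
    (α : EuclideanSpace ℝ (Fin n)) (hα : ∀ i ∉ T, α i = 0)
    (x : EuclideanSpace ℝ (Fin d)) (hx : x = Matrix.toEuclideanLin D α)
    (e : EuclideanSpace ℝ (Fin m)) (y : EuclideanSpace ℝ (Fin m))
    (hy : y = Matrix.toEuclideanLin M x + e)
    (xp : EuclideanSpace ℝ (Fin d))
    -- `x_p` is a minimizer of the constrained least-squares problem on `T̃`
    (hxp : ∃ αp : EuclideanSpace ℝ (Fin n), (∀ i ∉ Ttil, αp i = 0) ∧
      xp = Matrix.toEuclideanLin D αp ∧
      ∀ β : EuclideanSpace ℝ (Fin n), (∀ i ∉ Ttil, β i = 0) →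
        ‖y - Matrix.toEuclideanLin M xp‖ ≤
          ‖y - Matrix.toEuclideanLin M (Matrix.toEuclideanLin D β)‖) :
    ‖projOnto (colSpan D Ttil) (xp - x)‖ ≤
      δ * ‖xp - x‖ + ‖projOnto (colSpan D Ttil) (Matrix.toEuclideanLin Mᴴ e)‖ := by
  obtain ⟨αp, hαp, hxpD, hmin⟩ := hxp
  subst hy
  have hxpK : xp ∈ colSpan D Ttil := (mem_colSpan_iff D).2 ⟨αp, hαp, hxpD⟩
  have hxT : x ∈ colSpan D T := (mem_colSpan_iff D).2 ⟨α, hα, hx⟩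
  have hcard : (Ttil ∪ T).card ≤ (3 * ζ + 1) * k :=
    (Finset.card_union_le _ _).trans ((add_le_add hTtil hT).trans_eq (by ring))
  rw [Matrix.toEuclideanLin_conjTranspose_eq_adjoint]
  refine norm_starProjection_sub_le _ (colSpan_mono D Finset.subset_union_left)
    (fun v => hrip.norm_sq_bounds_of_mem_colSpan D hcard) hxpK (fun v hv => ?_)
    (sub_mem (colSpan_mono D Finset.subset_union_left hxpK)
      (colSpan_mono D Finset.subset_union_right hxT))
  obtain ⟨β, hβ, rfl⟩ := (mem_colSpan_iff D).1 hv
  exact hmin β hβ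

/-- Suppose `M` satisfies the D-RIP of order `(3ζ+1)k` with constant
`δ < 1`. Let `T̃` be a support of size at most `3ζk`, `T` the support of `x = Dα` with
`|T| ≤ k`, and `x_p` the constrained least-squares estimate on `T̃` from `y = Mx + e`. Then
`‖P_{T̃}(x_p − x)‖₂ ≤ δ‖x_p − x‖₂ + ‖P_{T̃} M* e‖₂`. -/
theorem stmt12 {m d n ζ k : ℕ} (hζ : 1 ≤ ζ)
    (M : Matrix (Fin m) (Fin d) ℝ) (D : Matrix (Fin d) (Fin n) ℝ)
    (δ : ℝ) (hδ : δ < 1) (hrip : DRIP M D ((3 * ζ + 1) * k) δ)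
    (Ttil : Finset (Fin n)) (hTtil : Ttil.card ≤ 3 * ζ * k)
    (T : Finset (Fin n)) (hT : T.card ≤ k)
    (α : EuclideanSpace ℝ (Fin n)) (hα : ∀ i ∉ T, α i = 0)
    (x : EuclideanSpace ℝ (Fin d)) (hx : x = Matrix.toEuclideanLin D α)
    (e : EuclideanSpace ℝ (Fin m)) (y : EuclideanSpace ℝ (Fin m))
    (hy : y = Matrix.toEuclideanLin M x + e)
    (xp : EuclideanSpace ℝ (Fin d))
    -- `x_p` is a minimizer of the constrained least-squares problem on `T̃`
    (hxp : ∃ αp : EuclideanSpace ℝ (Fin n), (∀ i ∉ Ttil, αp i = 0) ∧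
      xp = Matrix.toEuclideanLin D αp ∧
      ∀ β : EuclideanSpace ℝ (Fin n), (∀ i ∉ Ttil, β i = 0) →
        ‖y - Matrix.toEuclideanLin M xp‖ ≤
          ‖y - Matrix.toEuclideanLin M (Matrix.toEuclideanLin D β)‖) :
    ‖projOnto (colSpan D Ttil) (xp - x)‖ ≤
      δ * ‖xp - x‖ + ‖projOnto (colSpan D Ttil) (Matrix.toEuclideanLin Mᴴ e)‖ :=
  stmt12_general M D δ hrip Ttil hTtil T hT α hα x hx e y hy xp hxp

end
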